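/- arXiv:2010.12215 — 2 statements merged into one kernel-verified Lean document; each statement's English description precedes it below -/
import Mathlib

section
/- (Classical Koopman–von Neumann) Let (a_n)_{n≥0} be a bounded sequence of non-negative real numbers. Then (1/n) ∑_{k=0}^{n-1} a_k → 0 as n → ∞ if and only if there exists a set N ⊆ ℕ of density zero such that a_n → 0 as n → ∞ along n ∉ N. -/
open Filter Finset

/-- A set `N ⊆ ℕ` has density zero. -/
def HasDensityZero (N : Set ℕ) : Prop :=
  Tendsto (fun n => (∑ k ∈ Finset.range n, Set.indicator N (fun _ => (1 : ℝ)) k) / n)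
    atTop (nhds 0)

/-!
Forward: by Markov's inequality each level set `{k | δ ≤ a k}` has density zero, and a diagonal
argument glues the increasing family `{k | 1/(m+1) ≤ a k}` into one density-zero set `N`, taking
the `m`-th set only from a cutoff `t m` beyond which its density is already below `1/(m+1)`.
Backward: `a ≤ B · 𝟙_N + 𝟙_{Nᶜ} · a`; the Cesàro means of the first term are `B` times the
density quotients of `N`, and the second term tends to `0`, hence so do its Cesàro means.
-/

open Topology

noncomputable def cesaroMean (u : ℕ → ℝ) (n : ℕ) : ℝ := (∑ k ∈ range n, u k) / n

theorem cesaroMean_le_cesaroMean {u v : ℕ → ℝ} {n : ℕ} (h : ∀ k < n, u k ≤ v k) :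
    cesaroMean u n ≤ cesaroMean v n :=
  div_le_div_of_nonneg_right (sum_le_sum fun k hk => h k (mem_range.1 hk)) n.cast_nonneg

theorem cesaroMean_nonneg {u : ℕ → ℝ} (hu : 0 ≤ u) (n : ℕ) : 0 ≤ cesaroMean u n :=
  div_nonneg (sum_nonneg fun k _ => hu k) n.cast_nonneg

theorem cesaroMean_const_mul (c : ℝ) (u : ℕ → ℝ) (n : ℕ) :
    cesaroMean (fun k => c * u k) n = c * cesaroMean u n := by
  simp only [cesaroMean, ← mul_sum, mul_div_assoc]

theorem cesaroMean_add (u v : ℕ → ℝ) (n : ℕ) :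
    cesaroMean (u + v) n = cesaroMean u n + cesaroMean v n := by
  simp only [cesaroMean, Pi.add_apply, sum_add_distrib, add_div]

theorem tendsto_cesaroMean {u : ℕ → ℝ} {l : ℝ} (h : Tendsto u atTop (𝓝 l)) :
    Tendsto (cesaroMean u) atTop (𝓝 l) :=
  Tendsto.congr (fun _ => inv_mul_eq_div _ _) h.cesaro

theorem hasDensityZero_iff (N : Set ℕ) :
    HasDensityZero N ↔ Tendsto (cesaroMean (N.indicator 1)) atTop (𝓝 0) := Iff.rfl

theorem tendsto_zero_of_nonneg_of_eventually_lt {α : Type*} {l : Filter α} {f : α → ℝ}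
    (hf : 0 ≤ f) (h : ∀ ε > 0, ∀ᶠ x in l, f x < ε) : Tendsto f l (𝓝 0) :=
  tendsto_order.2 ⟨fun _ hε => .of_forall fun x => hε.trans_le (hf x), h⟩

theorem hasDensityZero_setOf_le {a : ℕ → ℝ} (hnn : 0 ≤ a)
    (h : Tendsto (cesaroMean a) atTop (𝓝 0)) {δ : ℝ} (hδ : 0 < δ) :
    HasDensityZero {k | δ ≤ a k} := by
  have hle : ∀ n, cesaroMean ({k | δ ≤ a k}.indicator 1) n ≤ δ⁻¹ * cesaroMean a n := fun n => by
    rw [← cesaroMean_const_mul]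
    refine cesaroMean_le_cesaroMean fun k _ => Set.indicator_apply_le' (fun hk => ?_) fun _ => ?_
    · exact (le_inv_mul_iff₀ hδ).2 (by simpa using hk)
    · exact mul_nonneg (inv_nonneg.2 hδ.le) (hnn k)
  exact squeeze_zero (cesaroMean_nonneg (Set.indicator_nonneg fun _ _ => zero_le_one))
    hle (by simpa using h.const_mul δ⁻¹)

theorem exists_hasDensityZero_eventually_subset {E : ℕ → Set ℕ} (hE_mono : Monotone E)
    (hE : ∀ m, HasDensityZero (E m)) :
    ∃ N, HasDensityZero N ∧ ∀ m, ∀ᶠ n in atTop, n ∈ E m → n ∈ N := by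
  obtain ⟨t, ht_mono, ht⟩ := extraction_forall_of_eventually fun m => eventually_forall_ge_atTop.2
    ((hE m).eventually (gt_mem_nhds (Nat.one_div_pos_of_nat (n := m))))
  refine ⟨{k | ∃ m, t m ≤ k ∧ k ∈ E m}, ?_, fun m => ?_⟩
  · refine tendsto_zero_of_nonneg_of_eventually_lt
      (cesaroMean_nonneg (Set.indicator_nonneg fun _ _ => zero_le_one)) fun ε hε => ?_
    obtain ⟨m, hm⟩ := exists_nat_one_div_lt hε
    filter_upwards [eventually_ge_atTop (t m)] with n hn
    -- `n` lies in a block `[t j, t (j + 1))` with `m ≤ j`; below `n` the glued set lies in `E j`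
    obtain ⟨j, hjn, hnj⟩ := ht_mono.exists_between_of_tendsto_atTop ht_mono.tendsto_atTop
      (Nat.lt_succ_of_le ((ht_mono.monotone (Nat.zero_le m)).trans hn))
    have hmj : m ≤ j := Nat.lt_succ_iff.1 (ht_mono.lt_iff_lt.1 (hn.trans_lt hnj))
    have hsub : ∀ k < n, k ∈ {k | ∃ m, t m ≤ k ∧ k ∈ E m} → k ∈ E j := by
      rintro k hkn ⟨i, hik, hki⟩
      exact hE_mono (Nat.lt_succ_iff.1 (ht_mono.lt_iff_lt.1 (hik.trans_lt (hkn.trans hnj)))) hki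
    calc cesaroMean (Set.indicator _ 1) n ≤ cesaroMean ((E j).indicator 1) n :=
          cesaroMean_le_cesaroMean fun k hk => Set.indicator_apply_le'
            (fun hkN => (Set.indicator_of_mem (hsub k hk hkN) _).ge)
            fun _ => Set.indicator_nonneg (fun _ _ => zero_le_one) k
      _ < 1 / (j + 1) := ht j n (Nat.lt_succ_iff.1 hjn)
      _ ≤ 1 / (m + 1) := Nat.one_div_le_one_div hmj
      _ < ε := hm
  · filter_upwards [eventually_ge_atTop (t m)] with n hn hnE using ⟨m, hn, hnE⟩

theorem tendsto_indicator_compl_of_forall_lt {a : ℕ → ℝ} {N : Set ℕ} (hnn : 0 ≤ a)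
    (h : ∀ ε > 0, ∃ N₀ : ℕ, ∀ n ≥ N₀, n ∉ N → a n < ε) :
    Tendsto (Nᶜ.indicator a) atTop (𝓝 0) := by
  refine tendsto_zero_of_nonneg_of_eventually_lt (Set.indicator_nonneg fun n _ => hnn n)
    fun ε hε => ?_
  obtain ⟨N₀, hN₀⟩ := h ε hε
  filter_upwards [eventually_ge_atTop N₀] with n hn
  by_cases hnN : n ∈ N
  · simpa [hnN] using hε
  · simpa [hnN] using hN₀ n hn hnN

theorem tendsto_cesaroMean_zero_of_hasDensityZero {a : ℕ → ℝ} {N : Set ℕ} {B : ℝ} (hnn : 0 ≤ a)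
    (hB : ∀ n, a n ≤ B) (hN : HasDensityZero N) (h : Tendsto (Nᶜ.indicator a) atTop (𝓝 0)) :
    Tendsto (cesaroMean a) atTop (𝓝 0) := by
  have hle : ∀ n, cesaroMean a n ≤
      B * cesaroMean (N.indicator 1) n + cesaroMean (Nᶜ.indicator a) n := fun n => by
    rw [← cesaroMean_const_mul, ← cesaroMean_add]
    refine cesaroMean_le_cesaroMean fun k _ => ?_
    by_cases hk : k ∈ N <;> simp [hk, hB k]
  have hbound : Tendsto (fun n => B * cesaroMean (N.indicator 1) n + cesaroMean (Nᶜ.indicator a) n)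
      atTop (𝓝 0) := by
    simpa only [mul_zero, add_zero] using
      (((hasDensityZero_iff N).1 hN).const_mul B).add (tendsto_cesaroMean h)
  exact squeeze_zero (cesaroMean_nonneg hnn) hle hbound

/-- Classical Koopman-von Neumann lemma: for a bounded nonnegative real sequence,
the Cesàro means tend to `0` iff the sequence tends to `0` off a density zero set. -/
theorem stmt6 (a : ℕ → ℝ) (hnn : ∀ n, 0 ≤ a n) (hbd : ∃ B : ℝ, ∀ n, a n ≤ B) :
    Tendsto (fun n => (∑ k ∈ Finset.range n, a k) / n) atTop (nhds 0) ↔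
      ∃ N : Set ℕ, HasDensityZero N ∧
        ∀ ε > (0 : ℝ), ∃ N₀ : ℕ, ∀ n ≥ N₀, n ∉ N → a n < ε := by
  constructor
  · intro h
    have hmono : Monotone fun m : ℕ => {k | 1 / ((m : ℝ) + 1) ≤ a k} := fun _ _ hm =>
      Set.ofPred_subset_ofPred.2 fun _ => (Nat.one_div_le_one_div hm).trans
    obtain ⟨N, hN, hsub⟩ := exists_hasDensityZero_eventually_subset hmono
      fun m => hasDensityZero_setOf_le hnn h Nat.one_div_pos_of_nat
    refine ⟨N, hN, fun ε hε => ?_⟩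
    obtain ⟨m, hm⟩ := exists_nat_one_div_lt hε
    obtain ⟨N₀, hN₀⟩ := eventually_atTop.1 (hsub m)
    exact ⟨N₀, fun n hn hnN => (not_le.1 (mt (hN₀ n hn) hnN)).trans hm⟩
  · rintro ⟨N, hN, hoff⟩
    obtain ⟨B, hB⟩ := hbd
    exact tendsto_cesaroMean_zero_of_hasDensityZero hnn hB hN
      (tendsto_indicator_compl_of_forall_lt hnn hoff)
end

section
/- Let E be a Dedekind complete Riesz space with weak order unit e, let T be a conditional expectation operator on E with Te = e, and let S be an order-continuous Riesz homomorphism on E with Se = e. If TSPe = TPe for every band projection P on E, then TSf = Tf for all f ∈ E. -/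
open Filter Finset

/-- Order convergence of a sequence in a Riesz space. -/
def OrderConvergesTo {E : Type*} [Lattice E] [AddCommGroup E] (x : ℕ → E) (l : E) : Prop :=
  ∃ y : ℕ → E, Antitone y ∧ IsGLB (Set.range y) (0 : E) ∧ ∀ n, |x n - l| ≤ y n

/-- A band (order) projection: a linear idempotent `P` with `0 ≤ P f ≤ f` for `f ≥ 0`. -/
def IsBandProjection {E : Type*} [Lattice E] [AddCommGroup E] [Module ℝ E]
    (P : Module.End ℝ E) : Prop :=
  P * P = P ∧ ∀ f : E, 0 ≤ f → 0 ≤ P f ∧ P f ≤ f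

/-- `e` is a weak order unit. -/
def IsWeakOrderUnit {E : Type*} [Lattice E] [AddCommGroup E] (e : E) : Prop :=
  0 < e ∧ ∀ f : E, 0 ≤ f → f ⊓ e = 0 → f = 0

/-- A conditional expectation operator: a positive, order continuous projection whose
range is a Dedekind complete Riesz subspace, mapping weak order units to weak order
units. -/
structure IsConditionalExpectation {E : Type*} [Lattice E] [AddCommGroup E] [Module ℝ E]
    (T : Module.End ℝ E) : Prop where
  positive : ∀ f : E, 0 ≤ f → 0 ≤ T f
  idem : T * T = T
  orderContinuous : ∀ A : Set E, A.Nonempty → DirectedOn (· ≤ ·) A →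
    ∀ l : E, IsLUB A l → IsLUB (T '' A) (T l)
  rangeSublattice : ∀ f g : E, T (T f ⊔ T g) = T f ⊔ T g
  rangeDedekindComplete : ∀ A ⊆ Set.range T, A.Nonempty → BddAbove A →
    ∃ l ∈ Set.range T, IsLUB A l
  mapsWeakUnits : ∀ e : E, IsWeakOrderUnit e → IsWeakOrderUnit (T e)

/-- An order continuous Riesz homomorphism. -/
structure IsOrderContRieszHom {E : Type*} [Lattice E] [AddCommGroup E] [Module ℝ E]
    (S : Module.End ℝ E) : Prop where
  latticeHom : ∀ f g : E, S (f ⊔ g) = S f ⊔ S g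
  orderContinuous : ∀ A : Set E, A.Nonempty → DirectedOn (· ≤ ·) A →
    ∀ l : E, IsLUB A l → IsLUB (S '' A) (S l)

/-!
Fix `0 ≤ f ≤ e` and `δ = 1/n`. The components `E_k = P_{(f - kδe)⁺} e` of `e` play the role of
the indicators of `{f > kδ}`, and the Freudenthal step function `s = δ (E_1 + ⋯ + E_n)` satisfies
`0 ≤ f - s ≤ δe`. By hypothesis `TS` and `T` agree on the span of the components of `e`, and both
are monotone and fix `e`, so `n • (TSf - Tf)` and `n • (Tf - TSf)` are bounded by `e` for every `n`;
Dedekind completeness makes `E` Archimedean, so `TSf = Tf`. Scaling gives the same on every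
interval `[0, n e]`; since `e` is a weak order unit, every `f ≥ 0` is the increasing supremum of
`f ⊓ n e`, and order continuity of `T` and `S` passes the identity to the positive cone, hence to
all of `E`.
-/

section LatticeOrderedGroup

variable {E : Type*} [Lattice E] [AddCommGroup E] [AddLeftMono E]

theorem inf_add_le_inf_add_inf {a b c : E} (ha : 0 ≤ a) (hb : 0 ≤ b) (hc : 0 ≤ c) :
    (a + b) ⊓ c ≤ a ⊓ c + b ⊓ c := by
  rw [inf_add, add_inf, add_inf]
  refine le_inf (le_inf inf_le_left ?_) (le_inf ?_ ?_) <;> refine inf_le_right.trans ?_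
  · exact le_add_of_nonneg_left ha
  · exact le_add_of_nonneg_right hb
  · exact le_add_of_nonneg_right hc

theorem posPart_sub_add_inf (a b : E) : (a - b)⁺ + a ⊓ b = a := by
  rw [inf_eq_sub_posPart_sub, add_sub_cancel]

theorem inf_add_sub_inf {a c d : E} (hd : 0 ≤ d) : a ⊓ (c + d) - a ⊓ c = (a - c)⁺ ⊓ d := by
  apply le_antisymm
  · refine le_inf ?_ ?_
    · calc a ⊓ (c + d) - a ⊓ c ≤ a - a ⊓ c := sub_le_sub_right inf_le_left _
        _ = (a - c)⁺ := by rw [inf_eq_sub_posPart_sub, sub_sub_cancel]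
    · rw [sub_le_iff_le_add', inf_add]
      exact inf_le_inf_right _ (le_add_of_nonneg_right hd)
  · rw [le_sub_iff_add_le, inf_add, posPart_sub_add_inf, add_comm c]
    exact inf_le_inf_left a (by gcongr; exact inf_le_right)

theorem negPart_inf_nsmul_posPart (a : E) (n : ℕ) : a⁻ ⊓ n • a⁺ = 0 := by
  induction n with
  | zero => simp
  | succ n ih =>
    refine le_antisymm ?_ (le_inf (negPart_nonneg a) (nsmul_nonneg (posPart_nonneg a) _))
    calc a⁻ ⊓ (n + 1) • a⁺ = (n • a⁺ + a⁺) ⊓ a⁻ := by rw [succ_nsmul, inf_comm]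
      _ ≤ n • a⁺ ⊓ a⁻ + a⁺ ⊓ a⁻ :=
          inf_add_le_inf_add_inf (nsmul_nonneg (posPart_nonneg a) _) (posPart_nonneg a)
            (negPart_nonneg a)
      _ = 0 := by rw [inf_comm, ih, posPart_inf_negPart_eq_zero, add_zero]

theorem inf_nsmul_posPart_le_posPart_add (c d : E) (n : ℕ) :
    d ⊓ n • c⁺ ≤ (c + d)⁺ := by
  rw [← sub_nonpos, ← negPart_inf_nsmul_posPart c n]
  refine le_inf ?_ ((sub_le_self _ (posPart_nonneg _)).trans inf_le_right)
  calc d ⊓ n • c⁺ - (c + d)⁺ ≤ d - (c + d) := sub_le_sub inf_le_left (le_posPart _)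
    _ = -c := by abel
    _ ≤ c⁻ := neg_le_negPart c

end LatticeOrderedGroup

section ConditionallyCompleteLatticeGroup

variable {E : Type*} [ConditionallyCompleteLattice E] [AddCommGroup E]

/-- For `g, x ≥ 0` this is the component of `x` in the band generated by `g`. -/
noncomputable def bandComponent (g x : E) : E :=
  ⨆ n : ℕ, x ⊓ n • g

theorem bddAbove_range_inf_nsmul (g x : E) : BddAbove (Set.range fun n : ℕ => x ⊓ n • g) :=
  ⟨x, Set.forall_mem_range.2 fun _ => inf_le_left⟩

theorem inf_nsmul_le_bandComponent (g x : E) (n : ℕ) : x ⊓ n • g ≤ bandComponent g x :=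
  le_ciSup (bddAbove_range_inf_nsmul g x) n

theorem bandComponent_le {g x c : E} (h : ∀ n : ℕ, x ⊓ n • g ≤ c) : bandComponent g x ≤ c :=
  ciSup_le h

theorem bandComponent_le_self (g x : E) : bandComponent g x ≤ x :=
  bandComponent_le fun _ => inf_le_left

theorem inf_le_bandComponent (g x : E) : x ⊓ g ≤ bandComponent g x := by
  simpa using inf_nsmul_le_bandComponent g x 1

theorem bandComponent_nonneg (g : E) {x : E} (hx : 0 ≤ x) : 0 ≤ bandComponent g x := by
  simpa [inf_eq_right.2 hx] using inf_nsmul_le_bandComponent g x 0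

theorem bandComponent_zero (g : E) : bandComponent g 0 = 0 :=
  le_antisymm (bandComponent_le_self g 0) (bandComponent_nonneg g le_rfl)

theorem bandComponent_bandComponent (g x : E) :
    bandComponent g (bandComponent g x) = bandComponent g x :=
  le_antisymm (bandComponent_le_self _ _) <| bandComponent_le fun n =>
    (le_inf (inf_nsmul_le_bandComponent g x n) inf_le_right).trans
      (inf_nsmul_le_bandComponent g _ n)

variable [AddLeftMono E]

theorem nonpos_of_forall_nsmul_le {x y : E} (h : ∀ n : ℕ, n • x ≤ y) : x ≤ 0 := by
  have hbdd : BddAbove (Set.range fun n : ℕ => n • x) := ⟨y, Set.forall_mem_range.2 h⟩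
  have hsup : (⨆ n : ℕ, n • x) + x ≤ ⨆ n : ℕ, n • x := by
    rw [← le_sub_iff_add_le]
    refine ciSup_le fun n => le_sub_iff_add_le.2 ?_
    rw [← succ_nsmul]
    exact le_ciSup hbdd (n + 1)
  simpa using hsup

theorem bandComponent_add {g x y : E} (hg : 0 ≤ g) (hx : 0 ≤ x) (hy : 0 ≤ y) :
    bandComponent g (x + y) = bandComponent g x + bandComponent g y := by
  apply le_antisymm
  · refine bandComponent_le fun n => ?_
    calc (x + y) ⊓ n • g ≤ x ⊓ n • g + y ⊓ n • g :=
          inf_add_le_inf_add_inf hx hy (nsmul_nonneg hg n)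
      _ ≤ bandComponent g x + bandComponent g y :=
          add_le_add (inf_nsmul_le_bandComponent g x n) (inf_nsmul_le_bandComponent g y n)
  · have key (m n : ℕ) : x ⊓ m • g + y ⊓ n • g ≤ bandComponent g (x + y) := by
      refine le_trans ?_ (inf_nsmul_le_bandComponent g (x + y) (m + n))
      rw [add_nsmul]
      exact le_inf (add_le_add inf_le_left inf_le_left) (add_le_add inf_le_right inf_le_right)
    rw [← le_sub_iff_add_le]
    refine bandComponent_le fun m => ?_
    rw [le_sub_iff_add_le, add_comm, ← le_sub_iff_add_le]
    exact bandComponent_le fun n => le_sub_iff_add_le.2 (add_comm (y ⊓ n • g) _ ▸ key m n)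

theorem bandComponent_posPart_sub_negPart {g a b : E} (hg : 0 ≤ g) (ha : 0 ≤ a) (hb : 0 ≤ b) :
    bandComponent g (a - b)⁺ - bandComponent g (a - b)⁻ = bandComponent g a - bandComponent g b := by
  have h : (a - b)⁺ + b = a + (a - b)⁻ := sub_eq_sub_iff_add_eq_add.1 (posPart_sub_negPart _)
  rw [sub_eq_sub_iff_add_eq_add, ← bandComponent_add hg (posPart_nonneg _) hb,
    ← bandComponent_add hg ha (negPart_nonneg _), h]

theorem inf_sub_bandComponent_eq_zero {g : E} (hg : 0 ≤ g) (x : E) :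
    (x - bandComponent g x) ⊓ g = 0 := by
  set y := (x - bandComponent g x) ⊓ g
  have key (n : ℕ) : y + x ⊓ n • g ≤ bandComponent g x :=
    calc y + x ⊓ n • g ≤ (x - x ⊓ n • g) ⊓ g + x ⊓ n • g :=
          add_le_add_left (inf_le_inf_right g
            (sub_le_sub_left (inf_nsmul_le_bandComponent g x n) x)) _
      _ = x ⊓ (g + x ⊓ n • g) := by rw [inf_add, sub_add_cancel]
      _ ≤ x ⊓ (n + 1) • g := by
          rw [succ_nsmul']
          exact inf_le_inf_left x (by gcongr; exact inf_le_right)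
      _ ≤ bandComponent g x := inf_nsmul_le_bandComponent g x (n + 1)
  have hy : bandComponent g x ≤ bandComponent g x - y :=
    bandComponent_le fun n => le_sub_iff_add_le'.2 (key n)
  exact le_antisymm (le_sub_self_iff _ |>.1 hy)
    (le_inf (sub_nonneg.2 (bandComponent_le_self g x)) hg)

theorem bandComponent_posPart_sub_le {d : E} (x : E) :
    bandComponent (x - d)⁺ d ≤ x⁺ ⊓ d :=
  bandComponent_le fun n =>
    le_inf (by simpa using inf_nsmul_posPart_le_posPart_add (x - d) d n) inf_le_left

theorem bandComponent_eq_self {e : E} (he : IsWeakOrderUnit e) (x : E) :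
    bandComponent e x = x := by
  have hdisj := inf_sub_bandComponent_eq_zero he.1.le x
  exact (sub_eq_zero.1 (he.2 _ (sub_nonneg.2 (bandComponent_le_self e x)) hdisj)).symm

theorem monotone_inf_nsmul (x : E) {e : E} (he : 0 ≤ e) : Monotone fun n : ℕ => x ⊓ n • e :=
  fun _ _ hmn => inf_le_inf_left x (nsmul_le_nsmul_left he hmn)

theorem isLUB_range_inf_nsmul {e : E} (he : IsWeakOrderUnit e) (x : E) :
    IsLUB (Set.range fun n : ℕ => x ⊓ n • e) x := by
  have h : IsLUB _ (bandComponent e x) := isLUB_ciSup (bddAbove_range_inf_nsmul e x)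
  rwa [bandComponent_eq_self he x] at h

end ConditionallyCompleteLatticeGroup

theorem ScottContinuous.eq_of_eqOn_of_isLUB {α β : Type*} [Preorder α] [PartialOrder β]
    {f g : α → β} (hf : ScottContinuous f) (hg : ScottContinuous g) {d : Set α}
    (hd : d.Nonempty) (hdir : DirectedOn (· ≤ ·) d) {a : α} (ha : IsLUB d a)
    (hfg : d.EqOn f g) : f a = g a :=
  (hf hd hdir ha).unique (hfg.image_eq ▸ hg hd hdir ha)

section Operators

variable {E : Type*} [Lattice E] [AddCommGroup E] [Module ℝ E]

theorem IsConditionalExpectation.scottContinuous {T : Module.End ℝ E}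
    (hT : IsConditionalExpectation T) : ScottContinuous T :=
  fun _ hd hdir _ hl => hT.orderContinuous _ hd hdir _ hl

theorem IsOrderContRieszHom.scottContinuous {S : Module.End ℝ E}
    (hS : IsOrderContRieszHom S) : ScottContinuous S :=
  fun _ hd hdir _ hl => hS.orderContinuous _ hd hdir _ hl

theorem eqOn_Icc_nsmul_of_eqOn_Icc [PosSMulMono ℝ E] {U V : Module.End ℝ E} {e : E}
    (h : Set.EqOn U V (Set.Icc 0 e)) (n : ℕ) : Set.EqOn U V (Set.Icc 0 (n • e)) := by
  rintro x ⟨hx, hxe⟩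
  rcases n.eq_zero_or_pos with rfl | hn
  · rw [le_antisymm (zero_nsmul e ▸ hxe) hx, map_zero, map_zero]
  have hn' : (0 : ℝ) < n := by positivity
  have hmem : (n : ℝ)⁻¹ • x ∈ Set.Icc 0 e :=
    ⟨smul_nonneg (inv_nonneg.2 hn'.le) hx,
      (inv_smul_le_iff_of_pos hn').2 (Nat.cast_smul_eq_nsmul ℝ n e ▸ hxe)⟩
  calc U x = (n : ℝ) • U ((n : ℝ)⁻¹ • x) := by rw [← map_smul, smul_inv_smul₀ hn'.ne']
    _ = (n : ℝ) • V ((n : ℝ)⁻¹ • x) := by rw [h hmem]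
    _ = V x := by rw [← map_smul, smul_inv_smul₀ hn'.ne']

end Operators

section VectorLattice

variable {E : Type*} [ConditionallyCompleteLattice E] [AddCommGroup E] [AddLeftMono E]
  [Module ℝ E] [PosSMulMono ℝ E]

theorem smul_bandComponent_le {g : E} (hg : 0 ≤ g) {r : ℝ} (hr : 0 < r) (x : E) :
    r • bandComponent g x ≤ bandComponent g (r • x) := by
  rw [← le_inv_smul_iff_of_pos hr]
  refine bandComponent_le fun n => ?_
  obtain ⟨k, hk⟩ := exists_nat_ge (r * n)
  have hnk : (r * n) • g ≤ k • g := by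
    rw [← Nat.cast_smul_eq_nsmul ℝ, ← sub_nonneg, ← sub_smul]
    exact smul_nonneg (sub_nonneg.2 hk) hg
  rw [le_inv_smul_iff_of_pos hr]
  calc r • (x ⊓ n • g) = r • x ⊓ (r * n) • g := by
        rw [mul_smul, Nat.cast_smul_eq_nsmul]
        exact (OrderIso.smulRight hr).map_inf _ _
    _ ≤ r • x ⊓ k • g := inf_le_inf_left _ hnk
    _ ≤ bandComponent g (r • x) := inf_nsmul_le_bandComponent g _ k

theorem bandComponent_smul {g : E} (hg : 0 ≤ g) {r : ℝ} (hr : 0 ≤ r) (x : E) :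
    bandComponent g (r • x) = r • bandComponent g x := by
  rcases hr.eq_or_lt with rfl | hr
  · simp [bandComponent_zero]
  refine le_antisymm ?_ (smul_bandComponent_le hg hr x)
  rw [← inv_smul_le_iff_of_pos hr]
  simpa [hr.ne'] using smul_bandComponent_le hg (inv_pos.2 hr) (r • x)

noncomputable def bandProj {g : E} (hg : 0 ≤ g) : Module.End ℝ E where
  toFun x := bandComponent g x⁺ - bandComponent g x⁻
  map_add' x y := by
    have hxy : x + y = (x⁺ + y⁺) - (x⁻ + y⁻) := by
      rw [add_sub_add_comm, posPart_sub_negPart, posPart_sub_negPart]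
    rw [hxy, bandComponent_posPart_sub_negPart hg
        (add_nonneg (posPart_nonneg x) (posPart_nonneg y))
        (add_nonneg (negPart_nonneg x) (negPart_nonneg y)),
      bandComponent_add hg (posPart_nonneg x) (posPart_nonneg y),
      bandComponent_add hg (negPart_nonneg x) (negPart_nonneg y)]
    abel
  map_smul' r x := by
    simp only [RingHom.id_apply]
    rcases le_or_gt 0 r with hr | hr
    · have hrx : r • x = r • x⁺ - r • x⁻ := by
        conv_lhs => rw [← posPart_sub_negPart x]
        module
      rw [hrx, bandComponent_posPart_sub_negPart hg (smul_nonneg hr (posPart_nonneg x))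
          (smul_nonneg hr (negPart_nonneg x)),
        bandComponent_smul hg hr, bandComponent_smul hg hr, smul_sub]
    · have hr' : 0 ≤ -r := by linarith
      have hrx : r • x = (-r) • x⁻ - (-r) • x⁺ := by
        conv_lhs => rw [← posPart_sub_negPart x]
        module
      rw [hrx, bandComponent_posPart_sub_negPart hg (smul_nonneg hr' (negPart_nonneg x))
          (smul_nonneg hr' (posPart_nonneg x)),
        bandComponent_smul hg hr', bandComponent_smul hg hr']
      module

theorem bandProj_apply {g : E} (hg : 0 ≤ g) (x : E) :
    bandProj hg x = bandComponent g x⁺ - bandComponent g x⁻ :=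
  rfl

theorem bandProj_apply_of_nonneg {g x : E} (hg : 0 ≤ g) (hx : 0 ≤ x) :
    bandProj hg x = bandComponent g x := by
  rw [bandProj_apply, posPart_eq_self.2 hx, negPart_eq_zero.2 hx, bandComponent_zero, sub_zero]

theorem isBandProjection_bandProj {g : E} (hg : 0 ≤ g) : IsBandProjection (bandProj hg) := by
  refine ⟨LinearMap.ext fun x => ?_, fun f hf => ?_⟩
  · rw [Module.End.mul_apply, bandProj_apply hg x, bandProj_apply,
      bandComponent_posPart_sub_negPart hg (bandComponent_nonneg g (posPart_nonneg x))
        (bandComponent_nonneg g (negPart_nonneg x)),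
      bandComponent_bandComponent, bandComponent_bandComponent]
  · rw [bandProj_apply_of_nonneg hg hf]
    exact ⟨bandComponent_nonneg g hf, bandComponent_le_self g f⟩

theorem exists_mem_span_bandProj_le_nsmul_sub_le {e f : E} (he : 0 ≤ e) (hf : 0 ≤ f)
    (hfe : f ≤ e) {n : ℕ} (hn : 0 < n) :
    ∃ s ∈ Submodule.span ℝ {P e | (P : Module.End ℝ E) (_ : IsBandProjection P)},
      s ≤ f ∧ n • (f - s) ≤ e := by
  set δ : ℝ := (n : ℝ)⁻¹
  have hδ : 0 < δ := by positivity
  have hδe : 0 ≤ δ • e := smul_nonneg hδ.le he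
  set c : ℕ → E := fun k => (k * δ) • e
  have hc (k : ℕ) : c (k + 1) = c k + δ • e := by
    simp only [c, Nat.cast_succ, add_mul, one_mul, add_smul]
  set comp : ℕ → E := fun k => bandComponent (f - c k)⁺ e
  have hcomp (k : ℕ) : δ • comp k = bandComponent (f - c k)⁺ (δ • e) :=
    (bandComponent_smul (posPart_nonneg _) hδ.le e).symm
  set w : ℕ → E := fun k => f ⊓ c (k + 1) - f ⊓ c k
  have hw (k : ℕ) : w k = (f - c k)⁺ ⊓ δ • e := by
    simp only [w]
    rw [hc, inf_add_sub_inf hδe]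
  have upper (k : ℕ) : w k ≤ δ • comp k := by
    rw [hw, hcomp, inf_comm]
    exact inf_le_bandComponent _ _
  have lower (k : ℕ) : δ • comp (k + 1) ≤ w k := by
    rw [hw, hcomp, hc, ← sub_sub]
    exact bandComponent_posPart_sub_le _
  have hsum : ∑ k ∈ range n, w k = f := by
    rw [Finset.sum_range_sub (fun k => f ⊓ c k)]
    simp [c, δ, hn.ne', inf_eq_left.2 hfe, inf_eq_right.2 hf]
  refine ⟨∑ k ∈ range n, δ • comp (k + 1), Submodule.sum_mem _ fun k _ =>
    Submodule.smul_mem _ _ (Submodule.subset_span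
      ⟨_, isBandProjection_bandProj (posPart_nonneg _), bandProj_apply_of_nonneg _ he⟩), ?_, ?_⟩
  · exact hsum ▸ sum_le_sum fun k _ => lower k
  have hδsub : f - ∑ k ∈ range n, δ • comp (k + 1) ≤ δ • e :=
    calc f - ∑ k ∈ range n, δ • comp (k + 1)
        = ∑ k ∈ range n, (w k - δ • comp (k + 1)) := by rw [sum_sub_distrib, hsum]
      _ ≤ ∑ k ∈ range n, (δ • comp k - δ • comp (k + 1)) :=
          sum_le_sum fun k _ => sub_le_sub_right (upper k) _
      _ = δ • comp 0 - δ • comp n := sum_range_sub' _ _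
      _ ≤ δ • comp 0 := sub_le_self _ (smul_nonneg hδ.le (bandComponent_nonneg _ he))
      _ ≤ δ • e := smul_le_smul_of_nonneg_left (bandComponent_le_self _ _) hδ.le
  rwa [← Nat.cast_smul_eq_nsmul ℝ, ← le_inv_smul_iff_of_pos (by positivity)]


theorem apply_le_of_forall_bandProj {U V : Module.End ℝ E} (hU : Monotone U) (hV : Monotone V)
    {e : E} (he : 0 ≤ e) (hUe : U e = e)
    (h : ∀ P : Module.End ℝ E, IsBandProjection P → U (P e) = V (P e))
    {f : E} (hf : 0 ≤ f) (hfe : f ≤ e) : U f ≤ V f := by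
  have hspan : Submodule.span ℝ {P e | (P : Module.End ℝ E) (_ : IsBandProjection P)} ≤
      LinearMap.eqLocus U V :=
    Submodule.span_le.2 fun _ ⟨P, hP, hPe⟩ => hPe ▸ h P hP
  rw [← sub_nonpos]
  refine nonpos_of_forall_nsmul_le (y := e) fun n => ?_
  rcases n.eq_zero_or_pos with rfl | hn
  · simpa using he
  obtain ⟨s, hs, hsf, hfs⟩ := exists_mem_span_bandProj_le_nsmul_sub_le he hf hfe hn
  have hVfs : 0 ≤ V (f - s) := map_zero V ▸ hV (sub_nonneg.2 hsf)
  calc n • (U f - V f) = n • U (f - s) - n • V (f - s) := by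
        rw [map_sub, map_sub, (hspan hs : U s = V s), ← smul_sub, sub_sub_sub_cancel_right]
    _ ≤ n • U (f - s) := sub_le_self _ (nsmul_nonneg hVfs n)
    _ = U (n • (f - s)) := (map_nsmul U n _).symm
    _ ≤ e := hUe ▸ hU hfs

theorem eqOn_Icc_of_forall_bandProj {U V : Module.End ℝ E} (hU : Monotone U) (hV : Monotone V)
    {e : E} (he : 0 ≤ e) (hUe : U e = e) (hVe : V e = e)
    (h : ∀ P : Module.End ℝ E, IsBandProjection P → U (P e) = V (P e)) :
    Set.EqOn U V (Set.Icc 0 e) := fun _ ⟨hf, hfe⟩ =>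
  le_antisymm (apply_le_of_forall_bandProj hU hV he hUe h hf hfe)
    (apply_le_of_forall_bandProj hV hU he hVe (fun P hP => (h P hP).symm) hf hfe)

end VectorLattice

/-- If `TSPe = TPe` for every band projection `P`, then `TSf = Tf` for all `f`. -/
theorem stmt15 {E : Type*} [ConditionallyCompleteLattice E] [AddCommGroup E]
    [CovariantClass E E (· + ·) (· ≤ ·)] [Module ℝ E] [PosSMulMono ℝ E]
    (e : E) (he : IsWeakOrderUnit e) (T S : Module.End ℝ E)
    (hT : IsConditionalExpectation T) (hTe : T e = e)
    (hS : IsOrderContRieszHom S) (hSe : S e = e)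
    (h : ∀ P : Module.End ℝ E, IsBandProjection P → T (S (P e)) = T (P e)) :
    ∀ f : E, T (S f) = T f := by
  have hTS : ScottContinuous (T * S) := hS.scottContinuous.comp hT.scottContinuous
  have hIcc : Set.EqOn (T * S) T (Set.Icc 0 e) :=
    eqOn_Icc_of_forall_bandProj hTS.monotone hT.scottContinuous.monotone he.1.le
      (by rw [Module.End.mul_apply, hSe, hTe]) hTe h
  have hnonneg (f : E) (hf : 0 ≤ f) : T (S f) = T f :=
    hTS.eq_of_eqOn_of_isLUB hT.scottContinuous (Set.range_nonempty _)
      (monotone_inf_nsmul f he.1.le).directed_le.directedOn_range (isLUB_range_inf_nsmul he f)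
      (by
        rintro _ ⟨n, rfl⟩
        exact eqOn_Icc_nsmul_of_eqOn_Icc hIcc n ⟨le_inf hf (nsmul_nonneg he.1.le n), inf_le_right⟩)
  intro f
  rw [← posPart_sub_negPart f, map_sub, map_sub, map_sub, hnonneg _ (posPart_nonneg f),
    hnonneg _ (negPart_nonneg f)]
end
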